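/- Let (K,v) be a valued field, (a_i)_{i<λ} a sequence pseudoconverging to a ∈ K, and P ∈ K[X] nonconstant. Then (P(a_i)) pseudoconverges to P(a). -/

import Mathlib

/-!
Expand `P` around `x`: `P(y) - P(x) = ∑_{k ≥ 1} c_k (y - x)^k` with `c_k` the Taylor coefficients.
Along the sequence, `γ_i = v(a_i - x)` is strictly increasing, so the term valuations
`v(c_k) + k γ_i` are affine in `γ_i` with distinct positive slopes `k`. Any two of them compare
strictly in a fixed way from some index on, hence one of them, of slope `k₀ ≥ 1`, is eventually
strictly smaller than all the others. By the ultrametric inequality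
`v(P(a_i) - P(x)) = v(c_{k₀}) + k₀ γ_i` eventually, which is strictly increasing in `i`.
-/

open Filter Polynomial

theorem StrictMono.eventually_gt_or_forall_lt {ι α : Type*} [Preorder ι] [NoMaxOrder ι]
    [LinearOrder α] {f : ι → α} (hf : StrictMono f) (c : α) :
    (∀ᶠ i in atTop, c < f i) ∨ ∀ i, f i < c := by
  by_cases h : ∃ i, c ≤ f i
  · obtain ⟨i, hi⟩ := h
    left
    filter_upwards [eventually_gt_atTop i] with j hj using hi.trans_lt (hf hj)
  · push Not at h
    exact Or.inr h

theorem StrictMono.exists_withTop_lift {ι α : Type*} [Preorder ι] [NoMaxOrder ι] [Preorder α]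
    {f : ι → WithTop α} (hf : StrictMono f) : ∃ g : ι → α, StrictMono g ∧ ∀ i, f i = g i := by
  have hne : ∀ i, f i ≠ ⊤ := fun i ↦
    let ⟨_, hj⟩ := exists_gt i
    (hf hj).ne_top
  choose g hg using fun i ↦ WithTop.ne_top_iff_exists.1 (hne i)
  refine ⟨g, fun i j hij ↦ ?_, fun i ↦ (hg i).symm⟩
  have := hf hij
  rwa [← hg, ← hg, WithTop.coe_lt_coe] at this

theorem Order.IsSuccLimit.noMaxOrder_Ioo {α : Type*} [LinearOrder α] [SuccOrder α] {a b : α}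
    (hb : Order.IsSuccLimit b) : NoMaxOrder (Set.Ioo a b) :=
  ⟨fun i ↦ ⟨⟨Order.succ i, i.2.1.trans_le (Order.le_succ _), hb.succ_lt i.2.2⟩,
    Order.lt_succ_of_not_isMax (not_isMax_of_lt i.2.2)⟩⟩

theorem Finset.exists_eventually_forall_lt {α ι β : Type*} [Preorder β] {l : Filter ι}
    {F : α → ι → β} {s : Finset α} (hs : s.Nonempty)
    (h : ∀ a ∈ s, ∀ b ∈ s, a ≠ b → (∀ᶠ i in l, F a i < F b i) ∨ ∀ᶠ i in l, F b i < F a i) :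
    ∃ a ∈ s, ∀ᶠ i in l, ∀ b ∈ s, b ≠ a → F a i < F b i := by
  induction hs using Finset.Nonempty.cons_induction with
  | singleton a =>
    exact ⟨a, mem_singleton_self a, .of_forall fun _ b hb hba ↦ (hba (mem_singleton.1 hb)).elim⟩
  | cons a s has hs ih =>
    obtain ⟨m, hm, hmin⟩ := ih fun b hb c hc ↦ h b (mem_cons_of_mem hb) c (mem_cons_of_mem hc)
    have ham : a ≠ m := fun ham ↦ has (ham ▸ hm)
    rcases h a (mem_cons_self a s) m (mem_cons_of_mem hm) ham with ham_lt | hma_lt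
    · refine ⟨a, mem_cons_self a s, ?_⟩
      filter_upwards [hmin, ham_lt] with i hmin ham_lt b hb hba
      obtain rfl | hb := mem_cons.1 hb
      · exact (hba rfl).elim
      obtain rfl | hbm := eq_or_ne b m
      · exact ham_lt
      · exact ham_lt.trans (hmin b hb hbm)
    · refine ⟨m, mem_cons_of_mem hm, ?_⟩
      filter_upwards [hmin, hma_lt] with i hmin hma_lt b hb hbm
      obtain rfl | hb := mem_cons.1 hb
      · exact hma_lt
      · exact hmin b hb hbm

theorem StrictMono.eventually_add_nsmul_lt_or_gt {ι Γ : Type*} [Preorder ι] [NoMaxOrder ι]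
    [AddCommGroup Γ] [LinearOrder Γ] [IsOrderedAddMonoid Γ] {g : ι → Γ} (hg : StrictMono g) (β β' : Γ) {k k' : ℕ} (hk : k < k') :
    (∀ᶠ i in atTop, β + k • g i < β' + k' • g i) ∨
      ∀ᶠ i in atTop, β' + k' • g i < β + k • g i := by
  have hsplit : ∀ γ : Γ, β' + k' • γ = ((k' - k) • γ + β') + k • γ := fun γ ↦ by
    rw [add_comm _ β', add_assoc, ← add_nsmul, Nat.sub_add_cancel hk.le]
  simp only [hsplit, add_lt_add_iff_right]
  rcases (hg.const_nsmul (Nat.sub_ne_zero_of_lt hk)).eventually_gt_or_forall_lt (β - β') with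
    h | h
  · exact Or.inl (by simpa only [sub_lt_iff_lt_add] using h)
  · exact Or.inr (.of_forall fun i ↦ by simpa only [lt_sub_iff_add_lt] using h i)

namespace AddValuation

theorem map_sum_eq_of_lt {R Γ₀ : Type*} [Ring R] [LinearOrderedAddCommMonoidWithTop Γ₀]
    (v : AddValuation R Γ₀) {ι : Type*} {s : Finset ι} {f : ι → R} {j : ι}
    (hj : j ∈ s) (hf : ∀ i ∈ s, i ≠ j → v (f j) < v (f i)) :
    v (∑ i ∈ s, f i) = v (f j) := by
  rcases eq_or_ne (v (f j)) ⊤ with htop | htop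
  · rw [Finset.sum_eq_single_of_mem j hj fun i hi hij ↦ ((hf i hi hij).ne_top htop).elim]
  classical
  rw [← Finset.add_sum_erase s f hj, v.map_add_eq_of_lt_left]
  exact v.map_lt_sum htop fun i hi ↦ hf i (Finset.mem_of_mem_erase hi) (Finset.ne_of_mem_erase hi)

variable {Γ : Type*} [AddCommGroup Γ] [LinearOrder Γ] [IsOrderedAddMonoid Γ]
  {K : Type*} [Field K] (v : AddValuation K (WithTop Γ))

theorem exists_eventually_map_eval_eq {ι : Type*} [Preorder ι] [NoMaxOrder ι] {t : ι → K}
    {g : ι → Γ} (hg : StrictMono g) (ht : ∀ i, v (t i) = g i) {Q : K[X]} (hQ : Q ≠ 0) :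
    ∃ k ∈ Q.support, ∃ β : Γ, ∀ᶠ i in atTop, v (Q.eval (t i)) = ↑(β + k • g i) := by
  have hterm : ∀ k ∈ Q.support, ∃ β : Γ, ∀ i, v (Q.coeff k * t i ^ k) = ↑(β + k • g i) :=
    fun k hk ↦
      let ⟨β, hβ⟩ := WithTop.ne_top_iff_exists.1 (v.ne_top_iff.2 (mem_support_iff.1 hk))
      ⟨β, fun i ↦ by rw [v.map_mul, v.map_pow, ht, ← hβ, WithTop.coe_add, WithTop.coe_nsmul]⟩
  have hcompare : ∀ k ∈ Q.support, ∀ k' ∈ Q.support, k < k' →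
      (∀ᶠ i in atTop, v (Q.coeff k * t i ^ k) < v (Q.coeff k' * t i ^ k')) ∨
        ∀ᶠ i in atTop, v (Q.coeff k' * t i ^ k') < v (Q.coeff k * t i ^ k) := by
    intro k hk k' hk' hkk'
    obtain ⟨β, hβ⟩ := hterm k hk
    obtain ⟨β', hβ'⟩ := hterm k' hk'
    simp only [hβ, hβ', WithTop.coe_lt_coe]
    exact hg.eventually_add_nsmul_lt_or_gt β β' hkk'
  obtain ⟨k, hk, hmin⟩ := Finset.exists_eventually_forall_lt (nonempty_support_iff.2 hQ)
    fun k hk k' hk' hne ↦ hne.lt_or_gt.elim (hcompare k hk k' hk') fun h ↦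
      (hcompare k' hk' k hk h).symm
  obtain ⟨β, hβ⟩ := hterm k hk
  refine ⟨k, hk, β, ?_⟩
  filter_upwards [hmin] with i hi
  rw [eval_eq_sum, sum_def, v.map_sum_eq_of_lt hk hi, hβ]

theorem eventually_forall_lt_map_eval_sub {ι : Type*} [Preorder ι] [NoMaxOrder ι] {a : ι → K}
    {x : K} (ha : StrictMono fun i ↦ v (a i - x)) {P : K[X]} (hP : 0 < P.natDegree) :
    ∀ᶠ i in atTop, ∀ j, i < j → v (P.eval (a i) - P.eval x) < v (P.eval (a j) - P.eval x) := by
  set Q := taylor x P - C (P.eval x)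
  have hQ_eval : ∀ y, Q.eval (y - x) = P.eval y - P.eval x := by
    simp [Q, taylor_eval_sub]
  have hQ0 : Q.coeff 0 = 0 := by simp [Q, taylor_coeff_zero]
  have hQ : Q ≠ 0 := fun h ↦ by
    have := congrArg natDegree h
    rw [natDegree_sub_C, natDegree_taylor, natDegree_zero] at this
    omega
  obtain ⟨g, hg, hvg⟩ := ha.exists_withTop_lift
  obtain ⟨k, hk, β, hev⟩ := v.exists_eventually_map_eval_eq hg hvg hQ
  have hk0 : k ≠ 0 := by
    rintro rfl
    exact mem_support_iff.1 hk hQ0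
  have hmono : StrictMono fun i ↦ β + k • g i := (hg.const_nsmul hk0).const_add β
  rw [← eventually_forall_ge_atTop] at hev
  filter_upwards [hev] with i hi j hij
  rw [← hQ_eval, ← hQ_eval, hi i le_rfl, hi j hij.le, WithTop.coe_lt_coe]
  exact hmono hij

end AddValuation

/-- Polynomials are continuous for pseudoconvergence: if `(a_i)_{i<λ}` pseudoconverges
to `x` in a valued field and `P` is a nonconstant polynomial, then `(P(a_i))`
pseudoconverges to `P(x)`. -/
theorem stmt_14 {K Γ : Type*} [Field K] [AddCommGroup Γ] [LinearOrder Γ] [IsOrderedAddMonoid Γ]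
    (v : AddValuation K (WithTop Γ)) (lam : Ordinal) (hlam : Order.IsSuccLimit lam)
    (a : Ordinal → K) (x : K)
    (h : ∃ i0 < lam, ∀ i j, i0 < i → i < j → j < lam → v (a i - x) < v (a j - x))
    (P : Polynomial K) (hP : 0 < P.natDegree) :
    ∃ i0 < lam, ∀ i j, i0 < i → i < j → j < lam →
      v (P.eval (a i) - P.eval x) < v (P.eval (a j) - P.eval x) := by
  obtain ⟨i0, hi0, hmono⟩ := h
  have := hlam.noMaxOrder_Ioo (a := i0)
  have : Nonempty (Set.Ioo i0 lam) := ⟨⟨Order.succ i0, Order.lt_succ i0, hlam.succ_lt hi0⟩⟩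
  have ha : StrictMono fun i : Set.Ioo i0 lam ↦ v (a i - x) :=
    fun i j hij ↦ hmono i j i.2.1 hij j.2.2
  obtain ⟨i1, hi1⟩ := (v.eventually_forall_lt_map_eval_sub ha hP).exists_forall_of_atTop
  exact ⟨i1, i1.2.2, fun i j hi hij hj ↦
    hi1 ⟨i, i1.2.1.trans hi, hij.trans hj⟩ hi.le ⟨j, i1.2.1.trans (hi.trans hij), hj⟩ hij⟩
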